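/- For every integer p ≥ 2 and every real f, the series ∑_{n=0}^∞ ((1/2)_n / n!)^2 · (n + f)/((n+1)(n+2)···(n+p)) equals (Γ(p)/Γ(p + 1/2)^2) · (f + 1/(4(p−1))). -/

import Mathlib

/-!
Write `c n = ((1/2)_n / n!)^2` and `A p = ∑ c n / (n+1)_p`. The contiguity relation
`Δ_n [n c n / (n+1)_p] = c n (1/4 - p n) / (n+1)_{p+1}`, summed over `n` (the boundary term
vanishes for `p ≥ 1` since `n c n → 1/π`), together with `1/(n+1)_p = (n+1+p)/(n+1)_{p+1}`,
gives `A (p+1) = 4p/(2p+1)^2 · A p` and `∑ c n · n / (n+1)_{p+1} = A p / (2p+1)^2`.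
At `p = 0` the same relation telescopes to `A 1 = lim 4 n c n = 4/π` by Wallis' product, so
`A p = Γ(p)/Γ(p+1/2)^2`, and the series of the theorem is `f · A p + A p / (4(p-1))`.
-/

open Real BigOperators

noncomputable def poch (a : ℝ) (n : ℕ) : ℝ := ∏ i ∈ Finset.range n, (a + i)

noncomputable def digamma (x : ℝ) : ℝ := deriv Real.Gamma x / Real.Gamma x

open Filter Finset Topology

lemma poch_zero (a : ℝ) : poch a 0 = 1 := prod_range_zero _

lemma poch_succ (a : ℝ) (n : ℕ) : poch a (n + 1) = poch a n * (a + n) :=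
  prod_range_succ _ _

lemma poch_succ' (a : ℝ) (n : ℕ) : poch a (n + 1) = a * poch (a + 1) n := by
  rw [poch, prod_range_succ', mul_comm]
  simp only [Nat.cast_zero, add_zero, Nat.cast_succ, poch, add_assoc, add_comm (1 : ℝ)]

lemma poch_pos {a : ℝ} (ha : 0 < a) (n : ℕ) : 0 < poch a n :=
  prod_pos fun _ _ => by positivity

lemma div_poch_eq_mul_div_poch_succ {a : ℝ} (ha : 0 < a) (x : ℝ) (n : ℕ) :
    x / poch a n = x * (a + n) / poch a (n + 1) := by
  rw [poch_succ, mul_div_mul_right _ _ (by positivity)]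

lemma one_le_poch {a : ℝ} (ha : 1 ≤ a) (n : ℕ) : 1 ≤ poch a n :=
  one_le_prod fun i _ => by linarith [(i.cast_nonneg : (0 : ℝ) ≤ i)]

lemma le_poch {a : ℝ} (ha : 0 ≤ a) {n : ℕ} (hn : 0 < n) : a ≤ poch a n := by
  obtain ⟨m, rfl⟩ := Nat.exists_eq_add_of_lt hn
  rw [zero_add, poch_succ']
  exact le_mul_of_one_le_right ha (one_le_poch (by linarith) m)

lemma tendsto_poch_atTop {n : ℕ} (hn : 0 < n) :
    Tendsto (fun k : ℕ => poch ((k : ℝ) + 1) n) atTop atTop :=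
  tendsto_atTop_mono (fun k => le_poch (by positivity) hn)
    (tendsto_atTop_add_const_right _ 1 tendsto_natCast_atTop_atTop)

noncomputable def centralCoeff (n : ℕ) : ℝ := (poch (1 / 2) n / n.factorial) ^ 2

lemma centralCoeff_zero : centralCoeff 0 = 1 := by simp [centralCoeff, poch_zero]

lemma centralCoeff_nonneg (n : ℕ) : 0 ≤ centralCoeff n := sq_nonneg _

lemma centralCoeff_succ (n : ℕ) :
    centralCoeff (n + 1) = centralCoeff n * ((2 * n + 1) / (2 * n + 2)) ^ 2 := by
  rw [centralCoeff, centralCoeff, poch_succ, Nat.factorial_succ]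
  push_cast
  field_simp
  ring

lemma mul_wallis_mul_centralCoeff (n : ℕ) :
    (2 * n + 1) * Real.Wallis.W n * centralCoeff n = 1 := by
  induction n with
  | zero => simp [Real.Wallis.W, centralCoeff_zero]
  | succ m ih =>
    rw [Real.Wallis.W_succ, centralCoeff_succ]
    push_cast
    field_simp
    linear_combination (2 * (m : ℝ) + 3) * ih

lemma tendsto_mul_centralCoeff :
    Tendsto (fun n : ℕ => n * centralCoeff n) atTop (𝓝 π⁻¹) := by
  have h := (tendsto_natCast_div_add_atTop (1 / 2 : ℝ)).mul
    ((Real.Wallis.tendsto_W_nhds_pi_div_two.const_mul 2).inv₀ (by positivity))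
  rw [mul_div_cancel₀ _ two_ne_zero, one_mul] at h
  refine h.congr fun n => ?_
  rw [eq_inv_of_mul_eq_one_right (mul_wallis_mul_centralCoeff n)]
  field_simp

lemma tendsto_mul_centralCoeff_div_poch {p : ℕ} (hp : 0 < p) :
    Tendsto (fun k : ℕ => k * centralCoeff k / poch ((k : ℝ) + 1) p) atTop (𝓝 0) := by
  have h := tendsto_mul_centralCoeff.mul (tendsto_poch_atTop hp).inv_tendsto_atTop
  rw [mul_zero] at h
  exact h.congr fun k => div_eq_mul_inv _ _

lemma centralCoeff_contiguity (p n : ℕ) :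
    ((n + 1 : ℕ) : ℝ) * centralCoeff (n + 1) / poch (((n + 1 : ℕ) : ℝ) + 1) p
      - n * centralCoeff n / poch ((n : ℝ) + 1) p
      = centralCoeff n * (1 - 4 * p * n) / (4 * poch ((n : ℝ) + 1) (p + 1)) := by
  have hP := (poch_pos (by positivity : (0 : ℝ) < n + 1) p).ne'
  have hshift : poch ((n : ℝ) + 1 + 1) p = poch ((n : ℝ) + 1) p * (n + 1 + p) / (n + 1) := by
    rw [eq_div_iff (by positivity), mul_comm, ← poch_succ', poch_succ]
  rw [centralCoeff_succ, poch_succ]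
  push_cast
  rw [hshift]
  field_simp
  ring

lemma hasSum_succ_sub_of_tendsto {α : Type*} [AddCommGroup α] [TopologicalSpace α]
    [IsTopologicalAddGroup α] [T2Space α] {T : ℕ → α} {L : α}
    (hT : Tendsto T atTop (𝓝 L)) (hs : Summable fun n => T (n + 1) - T n) :
    HasSum (fun n => T (n + 1) - T n) (L - T 0) := by
  have hpartial := hs.hasSum.tendsto_sum_nat
  simp only [sum_range_sub] at hpartial
  exact tendsto_nhds_unique (hT.sub_const (T 0)) hpartial ▸ hs.hasSum

noncomputable def gammaRatio (s : ℝ) : ℝ := Gamma s / Gamma (s + 1 / 2) ^ 2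

lemma gammaRatio_one : gammaRatio 1 = 4 / π := by
  rw [gammaRatio, Gamma_one, show (1 : ℝ) + 1 / 2 = 1 / 2 + 1 by norm_num,
    Gamma_add_one (by norm_num), Gamma_one_half_eq, mul_pow, sq_sqrt pi_pos.le]
  ring

lemma gammaRatio_add_one {s : ℝ} (hs : 0 < s) :
    gammaRatio (s + 1) = 4 * s / (2 * s + 1) ^ 2 * gammaRatio s := by
  have hG := (Gamma_pos_of_pos (by positivity : 0 < s + 1 / 2)).ne'
  rw [gammaRatio, gammaRatio, Gamma_add_one hs.ne', add_right_comm,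
    Gamma_add_one (by positivity)]
  field_simp
  ring

lemma hasSum_centralCoeff_div_poch_one :
    HasSum (fun n : ℕ => centralCoeff n / poch ((n : ℝ) + 1) 1) (4 / π) := by
  have hterm : ∀ n : ℕ, centralCoeff n / poch ((n : ℝ) + 1) 1
      = 4 * ((n + 1 : ℕ) * centralCoeff (n + 1) - n * centralCoeff n) := fun n => by
    have h := centralCoeff_contiguity 0 n
    simp only [poch_zero, div_one, Nat.cast_zero, mul_zero, zero_mul, sub_zero, mul_one] at h
    rw [h, zero_add]
    field_simp
  rw [hasSum_iff_tendsto_nat_of_nonneg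
    fun n => div_nonneg (centralCoeff_nonneg n) (poch_pos (by positivity) 1).le]
  simp only [hterm, ← mul_sum, sum_range_sub (fun k : ℕ => (k : ℝ) * centralCoeff k)]
  convert (tendsto_mul_centralCoeff.sub_const 0).const_mul 4 using 2 <;> simp [div_eq_mul_inv]

lemma hasSum_centralCoeff_div_poch_succ {p : ℕ} (hp : 0 < p) {A : ℝ}
    (hA : HasSum (fun n : ℕ => centralCoeff n / poch ((n : ℝ) + 1) p) A) :
    HasSum (fun n : ℕ => centralCoeff n / poch ((n : ℝ) + 1) (p + 1))
        (4 * p / (2 * p + 1) ^ 2 * A) ∧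
      HasSum (fun n : ℕ => centralCoeff n * n / poch ((n : ℝ) + 1) (p + 1))
        (A / (2 * p + 1) ^ 2) := by
  set u : ℕ → ℝ := fun n => centralCoeff n / poch ((n : ℝ) + 1) (p + 1)
  set v : ℕ → ℝ := fun n => centralCoeff n * n / poch ((n : ℝ) + 1) (p + 1)
  set T : ℕ → ℝ := fun k => k * centralCoeff k / poch ((k : ℝ) + 1) p
  have hu : ∀ n, 0 ≤ u n := fun n =>
    div_nonneg (centralCoeff_nonneg n) (poch_pos (by positivity) _).le
  have hv : ∀ n, 0 ≤ v n := fun n =>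
    div_nonneg (mul_nonneg (centralCoeff_nonneg n) n.cast_nonneg) (poch_pos (by positivity) _).le
  have hsplit : ∀ n, centralCoeff n / poch ((n : ℝ) + 1) p = (p + 1) * u n + v n := fun n => by
    rw [div_poch_eq_mul_div_poch_succ (by positivity)]
    ring
  have hΔ : ∀ n, T (n + 1) - T n = u n / 4 - p * v n := fun n => by
    simp only [T, centralCoeff_contiguity, u, v]
    ring
  obtain ⟨U, hU⟩ : Summable u := hA.summable.of_nonneg_of_le hu fun n => by
    nlinarith [hsplit n, hu n, hv n, (p.cast_nonneg : (0 : ℝ) ≤ p)]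
  obtain ⟨V, hV⟩ : Summable v := hA.summable.of_nonneg_of_le hv fun n => by
    nlinarith [hsplit n, hu n, hv n, (p.cast_nonneg : (0 : ℝ) ≤ p)]
  have hA_eq : A = (p + 1) * U + V :=
    hA.unique (((hU.mul_left _).add hV).congr_fun hsplit)
  have hUV : U / 4 - p * V = 0 := by
    have hsum := (hU.div_const 4).sub (hV.mul_left (p : ℝ))
    have h := hasSum_succ_sub_of_tendsto (tendsto_mul_centralCoeff_div_poch hp) (hsum.summable.congr fun n => (hΔ n).symm)
    simp only [T, Nat.cast_zero, zero_mul, zero_div, sub_zero, hΔ] at h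
    exact hsum.unique h
  have h2p : (2 * p + 1 : ℝ) ≠ 0 := by positivity
  constructor
  · convert hU using 1
    rw [hA_eq]
    field_simp
    linear_combination -4 * hUV
  · convert hV using 1
    rw [hA_eq]
    field_simp
    linear_combination (4 * (p : ℝ) + 4) * hUV

lemma hasSum_centralCoeff_div_poch {p : ℕ} (hp : 0 < p) :
    HasSum (fun n : ℕ => centralCoeff n / poch ((n : ℝ) + 1) p) (gammaRatio p) := by
  induction p, hp using Nat.le_induction with
  | base => simpa [gammaRatio_one] using hasSum_centralCoeff_div_poch_one
  | succ q hq ih =>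
    push_cast
    rw [gammaRatio_add_one (by positivity)]
    exact (hasSum_centralCoeff_div_poch_succ hq ih).1

theorem stmt11 (p : ℕ) (hp : 2 ≤ p) (f : ℝ) :
    ∑' n : ℕ, (poch (1/2) n / n.factorial) ^ 2 * (((n : ℝ) + f) / poch ((n : ℝ) + 1) p) =
      Real.Gamma p / Real.Gamma (p + 1/2) ^ 2 * (f + 1 / (4 * ((p : ℝ) - 1))) := by
  obtain ⟨q, rfl⟩ : ∃ q, p = q + 1 := ⟨p - 1, by omega⟩
  have hq : 0 < q := by omega
  obtain ⟨hu, hv⟩ := hasSum_centralCoeff_div_poch_succ hq (hasSum_centralCoeff_div_poch hq)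
  have hsum : HasSum (fun n : ℕ => (poch (1/2) n / n.factorial) ^ 2 *
      (((n : ℝ) + f) / poch ((n : ℝ) + 1) (q + 1))) _ :=
    ((hu.mul_left f).add hv).congr_fun fun n => by simp only [centralCoeff]; ring
  rw [hsum.tsum_eq]
  change _ = gammaRatio ((q + 1 : ℕ) : ℝ) * _
  push_cast
  rw [gammaRatio_add_one (by positivity), add_sub_cancel_right]
  field_simp
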